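/- arXiv:1512.06205 — 5 statements merged into one kernel-verified Lean document; each statement's English description precedes it below -/
import Mathlib

section
/- Let V be a finite set partitioned into disjoint subsets V_1, ..., V_n, each of odd size. Let G be a graph on vertex set V such that each V_i is an independent set in G and, for every pair i ≠ j, the bipartite subgraph induced on V_i ∪ V_j has all degrees even. Then the number of subsets U ⊆ V with |U ∩ V_i| = 1 for all i such that the subgraph of G induced on U has all degrees even is odd. -/
/-!
Work modulo 2 and choose one vertex `x i` from each part. Let `M_x` be the matrix with
`M_x i j = 1` iff `i = j` or `x i ∼ x j`; the graph induced on the `x i` is Eulerian iff every row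
of `M_x` sums to `1`, so the number of Eulerian transversals is
`∑ x, ∏ i, ∑ j, M_x i j = ∑ f, ∑ x, ∏ i, M_x i (f i)`, summed over all maps `f` of the index set.
If some `k` has `f k ≠ k` and no preimage under `f` other than `f k`, then `x k` enters the
product only through `M_x k (f k)` (and possibly the equal factor `M_x (f k) k`), and summing over
`x k` counts the neighbours of `x (f k)` in the part of `k`, an even number. This kills every
non-bijective `f` and every involution other than the identity; the remaining permutations pair
off as `π ↔ π⁻¹` with equal weights, which leaves the identity, of weight `∏ i, |V_i| ≡ 1`.
-/

open Finset Function Fintype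

theorem Fintype.sum_piFinset_eq_zero_of_sum_update_eq_zero {ι M : Type*} {α : ι → Type*}
    [DecidableEq ι] [Fintype ι] [AddCommMonoid M] (s : ∀ i, Finset (α i)) (k : ι)
    (F : (∀ i, α i) → M) (h : ∀ x ∈ piFinset s, ∑ y ∈ s k, F (update x k y) = 0) :
    ∑ x ∈ piFinset s, F x = 0 := by
  classical
  set rest : (∀ i, α i) → ∀ j : {j // j ≠ k}, α j := fun x j => x j
  rw [← sum_fiberwise_of_maps_to (fun x hx => mem_image_of_mem rest hx) F]
  refine Finset.sum_eq_zero fun z hz => ?_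
  obtain ⟨x₀, hx₀, rfl⟩ := mem_image.1 hz
  have hfiber : {x ∈ piFinset s | rest x = rest x₀} = (s k).image (update x₀ k) := by
    ext x
    simp only [mem_filter, mem_image, mem_piFinset]
    constructor
    · rintro ⟨hx, hrest⟩
      refine ⟨x k, hx k, funext fun j => ?_⟩
      by_cases hj : j = k
      · subst hj; simp
      · simpa [update_of_ne hj] using (congrFun hrest ⟨j, hj⟩).symm
    · rintro ⟨y, hy, rfl⟩
      refine ⟨fun j => ?_, funext fun j => update_of_ne j.2 _ _⟩
      by_cases hj : j = k
      · subst hj; simpa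
      · simpa [update_of_ne hj] using mem_piFinset.1 hx₀ j
  rw [hfiber, sum_image (update_injective x₀ k).injOn]
  exact h x₀ hx₀

section ClosedAdj

variable {ι V : Type*} [DecidableEq ι] (G : SimpleGraph V) [DecidableRel G.Adj]

def closedAdj (x : ι → V) (i j : ι) : ZMod 2 := if i = j ∨ G.Adj (x i) (x j) then 1 else 0

theorem closedAdj_comm (x : ι → V) (i j : ι) : closedAdj G x i j = closedAdj G x j i := by
  simp only [closedAdj, @eq_comm _ i j, G.adj_comm (x i)]

theorem closedAdj_update_self_of_ne (x : ι → V) {k j : ι} (hjk : j ≠ k) (y : V) :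
    closedAdj G (update x k y) k j = if G.Adj (x j) y then 1 else 0 := by
  simp only [closedAdj, hjk.symm, false_or, update_self, update_of_ne hjk, G.adj_comm y]

theorem sum_closedAdj [Fintype ι] (x : ι → V) (i : ι) :
    ∑ j, closedAdj G x i j = if Even #{j | G.Adj (x i) (x j)} then 1 else 0 := by
  have hsplit : ∀ j, closedAdj G x i j =
      (if i = j then 1 else 0) + if G.Adj (x i) (x j) then 1 else 0 := by
    intro j
    by_cases hij : i = j
    · subst hij; simp [closedAdj]
    · simp [closedAdj, hij]
  rw [sum_congr rfl fun j _ => hsplit j, sum_add_distrib, Fintype.sum_ite_eq, sum_boole]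
  rcases Nat.even_or_odd #{j | G.Adj (x i) (x j)} with h | h
  · rw [if_pos h, h.natCast_zmod_two, add_zero]
  · rw [if_neg (Nat.not_even_iff_odd.2 h), h.natCast_zmod_two]
    decide

end ClosedAdj

def CrossDegreesEven {ι V : Type*} (G : SimpleGraph V) [DecidableRel G.Adj] (P : ι → Finset V) :
    Prop :=
  ∀ i j, i ≠ j → ∀ v ∈ P i, Even #{w ∈ P j | G.Adj v w}

section Weight

variable {ι V : Type*} [Fintype ι] [DecidableEq ι] (G : SimpleGraph V) [DecidableRel G.Adj]
  (P : ι → Finset V)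

def weight (f : ι → ι) : ZMod 2 := ∑ x ∈ piFinset P, ∏ i, closedAdj G x i (f i)

theorem natCast_card_filter_even_eq_sum_weight :
    (#{x ∈ piFinset P | ∀ i, Even #{j | G.Adj (x i) (x j)}} : ZMod 2) =
      ∑ f : ι → ι, weight G P f := by
  rw [natCast_card_filter]
  unfold weight
  rw [sum_comm]
  refine sum_congr rfl fun x _ => ?_
  rw [← Fintype.prod_sum, prod_congr rfl fun i _ => sum_closedAdj G x i, Fintype.prod_boole]

theorem weight_inv (π : Equiv.Perm ι) : weight G P ⇑π⁻¹ = weight G P ⇑π := by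
  refine sum_congr rfl fun x _ => ?_
  calc ∏ i, closedAdj G x i (π⁻¹ i) = ∏ i, closedAdj G x (π i) (π⁻¹ (π i)) :=
        (Equiv.prod_comp π _).symm
    _ = ∏ i, closedAdj G x i (π i) := prod_congr rfl fun i _ => by
          rw [Equiv.Perm.coe_inv, Equiv.symm_apply_apply, closedAdj_comm]

theorem weight_one (hodd : ∀ i, Odd #(P i)) : weight G P ⇑(1 : Equiv.Perm ι) = 1 := by
  have hdiag : ∀ x : ι → V, ∏ i, closedAdj G x i i = 1 := fun x =>
    prod_eq_one fun i _ => by simp [closedAdj]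
  simp only [weight, Equiv.Perm.coe_one, id, hdiag, sum_const, card_piFinset, nsmul_eq_mul,
    mul_one, Nat.cast_prod]
  exact prod_eq_one fun i _ => (hodd i).natCast_zmod_two

variable {G P}

theorem weight_eq_zero_of_pendant (heven : CrossDegreesEven G P) {f : ι → ι} {k : ι}
    (hk : f k ≠ k) (hpre : ∀ i, f i = k → i = f k) : weight G P f = 0 := by
  refine sum_piFinset_eq_zero_of_sum_update_eq_zero P k _ fun x hx => ?_
  -- `R i` does not involve `x k`; when `x (f k) ∼ y` it is the `i`-th factor at `update x k y`.
  let R : ι → ZMod 2 := fun i => if f i = k then 1 else closedAdj G x i (f i)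
  have hfactor : ∀ y, ∏ i, closedAdj G (update x k y) i (f i) =
      (if G.Adj (x (f k)) y then 1 else 0) * ∏ i ∈ univ.erase k, R i := by
    intro y
    rw [← mul_prod_erase univ _ (mem_univ k), closedAdj_update_self_of_ne G x hk]
    by_cases hadj : G.Adj (x (f k)) y
    · refine congrArg _ (prod_congr rfl fun i hi => ?_)
      have hik := ne_of_mem_erase hi
      by_cases hfi : f i = k
      · obtain rfl := hpre i hfi
        rw [closedAdj_comm, hfi, closedAdj_update_self_of_ne G x hk, if_pos hadj]
        exact (if_pos hfi).symm
      · simp only [R, if_neg hfi, closedAdj, update_of_ne hik, update_of_ne hfi]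
    · rw [if_neg hadj, zero_mul, zero_mul]
  rw [sum_congr rfl fun y _ => hfactor y, ← sum_mul, sum_boole,
    (heven _ _ hk (x (f k)) (mem_piFinset.1 hx _)).natCast_zmod_two, zero_mul]

theorem weight_eq_zero_of_not_surjective (heven : CrossDegreesEven G P) {f : ι → ι}
    (hf : ¬ Surjective f) : weight G P f = 0 := by
  obtain ⟨k, hk⟩ := not_forall.1 hf
  exact weight_eq_zero_of_pendant heven (fun h => hk ⟨k, h⟩) fun i hi => (hk ⟨i, hi⟩).elim

theorem weight_eq_zero_of_inv_eq_self (heven : CrossDegreesEven G P) {π : Equiv.Perm ι}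
    (hπ : π⁻¹ = π) (hne : π ≠ 1) : weight G P π = 0 := by
  obtain ⟨k, hk⟩ : ∃ k, π k ≠ k := by
    by_contra! h
    exact hne (Equiv.ext h)
  refine weight_eq_zero_of_pendant heven hk fun i hi => ?_
  calc i = π⁻¹ (π i) := by rw [Equiv.Perm.coe_inv, Equiv.symm_apply_apply]
    _ = π k := by rw [hπ, hi]

theorem sum_weight_eq_sum_perm (heven : CrossDegreesEven G P) :
    ∑ f : ι → ι, weight G P f = ∑ π : Equiv.Perm ι, weight G P π := by
  let coeFn : Equiv.Perm ι ↪ (ι → ι) := ⟨_, DFunLike.coe_injective⟩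
  refine (sum_subset (subset_univ (univ.map coeFn)) fun f _ hf => ?_).symm.trans
    (sum_map _ _ _)
  refine weight_eq_zero_of_not_surjective heven fun hsurj => hf (mem_map.2 ?_)
  exact ⟨Equiv.ofBijective f ⟨Finite.injective_iff_surjective.2 hsurj, hsurj⟩, mem_univ _, rfl⟩

theorem sum_weight_perm_eq_one (hodd : ∀ i, Odd #(P i)) (heven : CrossDegreesEven G P) :
    ∑ π : Equiv.Perm ι, weight G P π = 1 := by
  rw [← add_sum_erase _ _ (mem_univ 1), weight_one G P hodd, add_eq_left]
  refine sum_involution (fun π _ => π⁻¹)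
    (fun π _ => by rw [weight_inv, CharTwo.add_self_eq_zero])
    (fun π hπ hW hinv => hW (weight_eq_zero_of_inv_eq_self heven hinv (ne_of_mem_erase hπ)))
    (fun π hπ => mem_erase.2 ⟨inv_ne_one.2 (ne_of_mem_erase hπ), mem_univ _⟩)
    fun π _ => inv_inv π

theorem odd_card_filter_even_degree (hodd : ∀ i, Odd #(P i)) (heven : CrossDegreesEven G P) :
    Odd #{x ∈ piFinset P | ∀ i, Even #{j | G.Adj (x i) (x j)}} := by
  rw [← ZMod.natCast_eq_one_iff_odd, natCast_card_filter_even_eq_sum_weight,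
    sum_weight_eq_sum_perm heven, sum_weight_perm_eq_one hodd heven]

end Weight

theorem ncard_adj_image_univ {ι V : Type*} [Fintype ι] [DecidableEq V] (G : SimpleGraph V)
    [DecidableRel G.Adj] {x : ι → V} (hx : Injective x) (v : V) :
    {w | w ∈ univ.image x ∧ G.Adj v w}.ncard = #{j | G.Adj v (x j)} := by
  rw [← card_image_of_injective _ hx, ← Set.ncard_coe_finset]
  congr 1
  ext w
  simp only [Set.mem_ofPred_eq, coe_image, coe_filter, mem_univ, true_and, Set.mem_image,
    mem_image]
  constructor
  · rintro ⟨⟨j, rfl⟩, hadj⟩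
    exact ⟨j, hadj, rfl⟩
  · rintro ⟨j, hadj, rfl⟩
    exact ⟨⟨j, rfl⟩, hadj⟩

theorem injective_of_mem_piFinset {ι V : Type*} [Fintype ι] [DecidableEq ι] {P : ι → Finset V}
    (hdisj : Pairwise (Disjoint on P)) {x : ι → V} (hx : x ∈ piFinset P) : Injective x :=
  fun i j hij => by
    by_contra hne
    exact disjoint_left.1 (hdisj hne) (mem_piFinset.1 hx i) (hij.symm ▸ mem_piFinset.1 hx j)

section Partition

variable {ι V : Type*} [Fintype ι] [DecidableEq ι] [DecidableEq V] {P : ι → Finset V}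

theorem image_inter_eq_singleton (hdisj : Pairwise (Disjoint on P)) {x : ι → V}
    (hx : x ∈ piFinset P) (i : ι) : univ.image x ∩ P i = {x i} := by
  ext v
  simp only [mem_inter, mem_image, mem_univ, true_and, mem_singleton]
  constructor
  · rintro ⟨⟨j, rfl⟩, hj⟩
    by_contra hji
    exact disjoint_left.1 (hdisj fun h => hji (congrArg x h)) (mem_piFinset.1 hx j) hj
  · rintro rfl
    exact ⟨⟨i, rfl⟩, mem_piFinset.1 hx i⟩

theorem injOn_image_univ (hdisj : Pairwise (Disjoint on P)) :
    Set.InjOn (fun x : ι → V => univ.image x) (piFinset P) := fun x hx y hy hxy => by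
  funext i
  have hmem : x i ∈ univ.image y ∩ P i := by
    rw [← show univ.image x = univ.image y from hxy, image_inter_eq_singleton hdisj hx]
    exact mem_singleton_self _
  rwa [image_inter_eq_singleton hdisj hy, mem_singleton] at hmem

theorem exists_mem_piFinset_image_eq (hcover : ∀ v, ∃ i, v ∈ P i) {U : Finset V}
    (hU : ∀ i, #(U ∩ P i) = 1) : ∃ x ∈ piFinset P, univ.image x = U := by
  choose x hx using fun i => card_eq_one.1 (hU i)
  have hmem : ∀ i, x i ∈ U ∧ x i ∈ P i := fun i =>
    mem_inter.1 ((hx i).symm ▸ mem_singleton_self _)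
  refine ⟨x, mem_piFinset.2 fun i => (hmem i).2, ?_⟩
  ext v
  simp only [mem_image, mem_univ, true_and]
  constructor
  · rintro ⟨i, rfl⟩
    exact (hmem i).1
  · intro hv
    obtain ⟨i, hi⟩ := hcover v
    have : v ∈ U ∩ P i := mem_inter.2 ⟨hv, hi⟩
    rw [hx i, mem_singleton] at this
    exact ⟨i, this.symm⟩

theorem ncard_eulerian_transversals_eq (G : SimpleGraph V) [DecidableRel G.Adj]
    (hdisj : Pairwise (Disjoint on P)) (hcover : ∀ v, ∃ i, v ∈ P i) :
    {U : Finset V | (∀ i, #(U ∩ P i) = 1) ∧ ∀ v ∈ U, Even {w | w ∈ U ∧ G.Adj v w}.ncard}.ncard =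
      #{x ∈ piFinset P | ∀ i, Even #{j | G.Adj (x i) (x j)}} := by
  rw [← card_image_of_injOn ((injOn_image_univ hdisj).mono (filter_subset _ _)),
    ← Set.ncard_coe_finset]
  congr 1
  ext U
  simp only [Set.mem_ofPred_eq, coe_image, Set.mem_image, mem_coe, mem_filter]
  constructor
  · rintro ⟨hU, hdeg⟩
    obtain ⟨x, hx, rfl⟩ := exists_mem_piFinset_image_eq hcover hU
    refine ⟨x, ⟨hx, fun i => ?_⟩, rfl⟩
    rw [← ncard_adj_image_univ G (injective_of_mem_piFinset hdisj hx)]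
    exact hdeg (x i) (mem_image_of_mem x (mem_univ i))
  · rintro ⟨x, ⟨hx, hdeg⟩, rfl⟩
    refine ⟨fun i => by rw [image_inter_eq_singleton hdisj hx, card_singleton], fun v hv => ?_⟩
    obtain ⟨i, -, rfl⟩ := mem_image.1 hv
    rw [ncard_adj_image_univ G (injective_of_mem_piFinset hdisj hx)]
    exact hdeg i

end Partition

theorem stmt_0_general {V : Type*} [DecidableEq V] (n : ℕ)
    (G : SimpleGraph V) (P : Fin n → Finset V)
    (hdisj : ∀ i j, i ≠ j → Disjoint (P i) (P j))
    (hcover : ∀ v : V, ∃ i, v ∈ P i)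
    (hodd : ∀ i, Odd (P i).card)
    (heuler : ∀ i j, i ≠ j → ∀ v ∈ P i, Even {w | w ∈ P j ∧ G.Adj v w}.ncard) :
    Odd {U : Finset V |
        (∀ i, (U ∩ P i).card = 1) ∧
        (∀ v ∈ U, Even {w | w ∈ U ∧ G.Adj v w}.ncard)}.ncard := by
  classical
  have heven : CrossDegreesEven G P := fun i j hij v hv => by
    rw [← Set.ncard_coe_finset, coe_filter]
    exact heuler i j hij v hv
  rw [ncard_eulerian_transversals_eq G (fun i j => hdisj i j) hcover]
  exact odd_card_filter_even_degree (G := G) (P := P) hodd heven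

/-- parity of Eulerian transversals. -/
theorem stmt_0 {V : Type*} [Fintype V] [DecidableEq V] (n : ℕ)
    (G : SimpleGraph V) (P : Fin n → Finset V)
    (hdisj : ∀ i j, i ≠ j → Disjoint (P i) (P j))
    (hcover : ∀ v : V, ∃ i, v ∈ P i)
    (hodd : ∀ i, Odd (P i).card)
    (hindep : ∀ i, ∀ x ∈ P i, ∀ y ∈ P i, ¬ G.Adj x y)
    (heuler : ∀ i j, i ≠ j → ∀ v ∈ P i, Even {w | w ∈ P j ∧ G.Adj v w}.ncard) :
    Odd {U : Finset V |
        (∀ i, (U ∩ P i).card = 1) ∧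
        (∀ v ∈ U, Even {w | w ∈ U ∧ G.Adj v w}.ncard)}.ncard :=
  stmt_0_general n G P hdisj hcover hodd heuler
end

section
/- Let P_1, ..., P_n be closed polygonal lines inscribed in a circle, each with an odd number of edges, such that no two polygonal lines share a vertex and all vertices are distinct points on the circle. Then the number of ways to choose one edge s_i from each P_i so that every chosen edge (chord) crosses an even number of other chosen chords is odd. -/
/-- `circBtw a b c` : the point with angle `b` lies strictly between the points
with angles `a` and `c`, going counterclockwise (angles taken in `[0, 2π)`). -/
def circBtw (a b c : ℝ) : Prop :=
  if a < c then a < b ∧ b < c else a < b ∨ b < c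

/-- Two chords of the circle, with endpoint angles `{a,b}` and `{c,d}`, cross
iff their endpoints alternate around the circle. -/
def chordsCross (a b c d : ℝ) : Prop :=
  Xor' (circBtw a c b) (circBtw a d b)

/-!
Count modulo 2, with `A i j x y = 1` when edge `x` of `P_i` crosses edge `y` of `P_j`. The number
of good choices is `∑_s ∏_i (1 + ∑_{j ≠ i} A i j (s i) (s j))`, and expanding the product turns
it into a sum over maps `σ : ι → ι`, where `σ i = i` selects the summand `1`. If `k` is not in the
range of `σ`, the edge `s k` occurs in a single factor `A k (σ k)`; summing it over `P_k` gives
zero since a closed polygon crosses every chord an even number of times, and since `P_k` has an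
odd number of edges this forces the whole sum to vanish. The remaining `σ` are permutations.
Crossing is symmetric, so `σ` and `σ⁻¹` have the same weight; a nontrivial involution has weight
zero because a swapped pair `k, j` contributes `A k j ^ 2 = A k j`, which again vanishes on
summing over `s k`. Only the identity is left, and it contributes the product of the odd
polygon sizes.
-/

open Finset Function

theorem chordsCross_iff_xor {a b c d : ℝ} :
    chordsCross a b c d ↔ Xor (circBtw a c b) (circBtw a d b) := Iff.rfl

theorem chordsCross_comm {a b c d : ℝ} (hac : a ≠ c) (hbd : b ≠ d) :
    chordsCross a b c d ↔ chordsCross c d a b := by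
  simp only [chordsCross_iff_xor, circBtw, xor_iff_not_iff]
  grind

theorem natCast_ncard_setOf {α R : Type*} [Fintype α] [AddCommMonoidWithOne R] (p : α → Prop)
    [DecidablePred p] : ({x | p x}.ncard : R) = ∑ x, if p x then 1 else 0 := by
  rw [Set.ncard_eq_toFinset_card', Set.toFinset_ofPred, natCast_card_filter]

theorem ZMod.ite_xor_eq_add (p q : Prop) [Decidable p] [Decidable q] :
    (if Xor p q then 1 else 0 : ZMod 2) = (if p then 1 else 0) + (if q then 1 else 0) := by
  by_cases hp : p <;> by_cases hq : q <;> simp [hp, hq]; decide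

theorem ZMod.ite_forall_eq_zero {ι : Type*} [Fintype ι] (x : ι → ZMod 2) :
    (if ∀ i, x i = 0 then 1 else 0 : ZMod 2) = ∏ i, (1 + x i) := by
  split_ifs with h
  · simp [h]
  · obtain ⟨i, hi⟩ := not_forall.mp h
    have hone : ∀ y : ZMod 2, y ≠ 0 → 1 + y = 0 := by decide
    exact (prod_eq_zero (mem_univ i) (hone _ hi)).symm

/-- The edge from `w x` to `w (x + 1)` crosses the chord `cd` exactly when its endpoints lie on
different arcs cut out by `c` and `d`, and going once around the polygon returns to the start. -/
theorem even_ncard_chordsCross_polygon {N : ℕ} [NeZero N] (w : Fin N → ℝ) {c d : ℝ}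
    (hc : ∀ x, w x ≠ c) (hd : ∀ x, w x ≠ d) :
    Even {x | chordsCross (w x) (w (x + 1)) c d}.ncard := by
  classical
  have hside : ∀ x, chordsCross (w x) (w (x + 1)) c d ↔
      Xor (circBtw c (w x) d) (circBtw c (w (x + 1)) d) :=
    fun x => chordsCross_comm (hc x) (hd (x + 1))
  rw [← ZMod.natCast_eq_zero_iff_even, natCast_ncard_setOf]
  simp only [hside, ZMod.ite_xor_eq_add, sum_add_distrib]
  have hshift : ∑ x, (if circBtw c (w (x + 1)) d then 1 else 0 : ZMod 2) =
      ∑ x, if circBtw c (w x) d then 1 else 0 :=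
    Equiv.sum_comp (Equiv.addRight 1) fun x => if circBtw c (w x) d then 1 else 0
  rw [hshift, CharTwo.add_self_eq_zero]

section Parity

variable {ι : Type*} [DecidableEq ι] {E : ι → Type*} (A : ∀ i j, E i → E j → ZMod 2)

def pairWeight (s : ∀ i, E i) (i j : ι) : ZMod 2 :=
  if i = j then 1 else A i j (s i) (s j)

variable {A}

theorem pairWeight_comm (hsymm : ∀ i j x y, i ≠ j → A i j x y = A j i y x)
    (s : ∀ i, E i) (i j : ι) : pairWeight A s i j = pairWeight A s j i := by
  unfold pairWeight
  split_ifs with hij hji hji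
  · rfl
  · exact absurd hij.symm hji
  · exact absurd hji.symm hij
  · exact hsymm i j _ _ hij

theorem prod_pairWeight_update {s : ∀ i, E i} {k : ι} (x : E k) {σ : ι → ι} {T : Finset ι}
    (hT : ∀ i ∈ T, i ≠ k ∧ σ i ≠ k) :
    ∏ i ∈ T, pairWeight A (update s k x) i (σ i) = ∏ i ∈ T, pairWeight A s i (σ i) := by
  refine prod_congr rfl fun i hi => ?_
  simp [pairWeight, update_of_ne (hT i hi).1, update_of_ne (hT i hi).2]

variable [Fintype ι] [∀ i, Fintype (E i)]

theorem sum_eq_zero_of_sum_update_eq_zero {k : ι} (hk : Odd (Fintype.card (E k)))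
    (f : (∀ i, E i) → ZMod 2) (h : ∀ s, ∑ x, f (update s k x) = 0) : ∑ s, f s = 0 := by
  have hresample : ∑ p : (∀ i, E i) × E k, f (update p.1 k p.2) = ∑ p : (∀ i, E i) × E k, f p.1 :=
    Fintype.sum_equiv ⟨fun p => (update p.1 k p.2, p.1 k), fun p => (update p.1 k p.2, p.1 k),
      fun p => by simp, fun p => by simp⟩ _ _ fun _ => rfl
  calc ∑ s, f s = Fintype.card (E k) • ∑ s, f s := by
        rw [nsmul_eq_mul, (ZMod.natCast_eq_one_iff_odd).2 hk, one_mul]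
    _ = ∑ p : (∀ i, E i) × E k, f p.1 := by
        simp [Fintype.sum_prod_type, smul_sum]
    _ = 0 := by
        rw [← hresample, Fintype.sum_prod_type]
        simp [h]

variable (A) in
def weightSum (σ : ι → ι) : ZMod 2 :=
  ∑ s : ∀ i, E i, ∏ i, pairWeight A s i (σ i)

theorem weightSum_perm_inv (hsymm : ∀ i j x y, i ≠ j → A i j x y = A j i y x)
    (π : Equiv.Perm ι) : weightSum A ⇑π⁻¹ = weightSum A π := by
  refine sum_congr rfl fun s _ => ?_
  rw [← Equiv.prod_comp π]
  exact prod_congr rfl fun i _ => by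
    rw [Equiv.Perm.coe_inv, π.symm_apply_apply, pairWeight_comm hsymm]

theorem weightSum_id (hodd : ∀ i, Odd (Fintype.card (E i))) : weightSum A id = 1 := by
  simp only [weightSum, pairWeight, id, if_true, prod_const_one, sum_const, card_univ,
    nsmul_eq_mul, mul_one]
  rw [ZMod.natCast_eq_one_iff_odd, Fintype.card_pi]
  exact prod_induction _ Odd (fun _ _ => Odd.mul) odd_one fun i _ => hodd i

variable (hodd : ∀ i, Odd (Fintype.card (E i)))
  (heven : ∀ i j, i ≠ j → ∀ y, ∑ x, A i j x y = 0)
include hodd heven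

theorem weightSum_eq_zero_of_isolated {σ : ι → ι} {k j : ι} (hjk : j ≠ k)
    (R : (∀ i, E i) → ZMod 2)
    (hR : ∀ s x, ∏ i, pairWeight A (update s k x) i (σ i) = A k j x (s j) * R s) :
    weightSum A σ = 0 := by
  refine sum_eq_zero_of_sum_update_eq_zero (hodd k) _ fun s => ?_
  simp only [hR, ← sum_mul, heven k j hjk.symm, zero_mul]

theorem weightSum_eq_zero_of_notMem_range {σ : ι → ι} {k : ι} (hk : k ∉ Set.range σ) :
    weightSum A σ = 0 := by
  have hσk : σ k ≠ k := fun h => hk ⟨k, h⟩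
  refine weightSum_eq_zero_of_isolated hodd heven hσk
    (fun s => ∏ i ∈ univ.erase k, pairWeight A s i (σ i)) fun s x => ?_
  rw [← mul_prod_erase univ _ (mem_univ k), prod_pairWeight_update x fun i hi =>
    ⟨ne_of_mem_erase hi, fun h => hk ⟨i, h⟩⟩]
  simp [pairWeight, hσk.symm, update_of_ne hσk]

theorem weightSum_eq_zero_of_swap (hsymm : ∀ i j x y, i ≠ j → A i j x y = A j i y x)
    {π : Equiv.Perm ι} {k j : ι} (hkj : k ≠ j) (hk : π k = j) (hj : π j = k) :
    weightSum A π = 0 := by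
  have hT : ∀ i ∈ (univ.erase k).erase j, i ≠ k ∧ π i ≠ k := fun i hi =>
    ⟨ne_of_mem_erase (mem_of_mem_erase hi),
      fun h => ne_of_mem_erase hi (π.injective (h.trans hj.symm))⟩
  refine weightSum_eq_zero_of_isolated hodd heven hkj.symm
    (fun s => ∏ i ∈ (univ.erase k).erase j, pairWeight A s i (π i)) fun s x => ?_
  rw [← mul_prod_erase univ _ (mem_univ k),
    ← mul_prod_erase (univ.erase k) _ (mem_erase.2 ⟨hkj.symm, mem_univ j⟩), ← mul_assoc,
    prod_pairWeight_update x hT, hk, hj]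
  congr 1
  simp only [pairWeight, if_neg hkj, if_neg hkj.symm, update_self, update_of_ne hkj.symm]
  rw [← hsymm k j _ _ hkj, ← sq, ZMod.pow_card]

theorem sum_perm_weightSum (hsymm : ∀ i j x y, i ≠ j → A i j x y = A j i y x) :
    ∑ π : Equiv.Perm ι, weightSum A π = 1 := by
  rw [← add_sum_erase univ _ (mem_univ 1), Equiv.Perm.coe_one, weightSum_id hodd,
    add_eq_left]
  refine sum_involution (fun π _ => π⁻¹)
    (fun π _ => by rw [weightSum_perm_inv hsymm, CharTwo.add_self_eq_zero])
    (fun π hπ hne hinv => hne ?_) (fun π hπ => by simpa using hπ) fun π _ => inv_inv π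
  obtain ⟨k, hk⟩ : ∃ k, π k ≠ k := by
    by_contra! hfix
    exact ne_of_mem_erase hπ (Equiv.ext hfix)
  refine weightSum_eq_zero_of_swap hodd heven hsymm (Ne.symm hk) rfl ?_
  rw [← Equiv.Perm.eq_inv_iff_eq, hinv]

theorem sum_weightSum (hsymm : ∀ i j x y, i ≠ j → A i j x y = A j i y x) :
    ∑ σ : ι → ι, weightSum A σ = 1 := by
  rw [← sum_perm_weightSum hodd heven hsymm,
    ← sum_image fun π _ π' _ h => DFunLike.coe_injective h]
  refine (sum_subset (subset_univ _) fun σ _ hσ => ?_).symm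
  obtain ⟨k, hk⟩ : ∃ k, k ∉ Set.range σ := by
    by_contra! hsurj
    have hbij : Bijective σ := ⟨Finite.injective_iff_surjective.2 hsurj, hsurj⟩
    exact hσ (mem_image.2 ⟨Equiv.ofBijective σ hbij, mem_univ _, rfl⟩)
  exact weightSum_eq_zero_of_notMem_range hodd heven hk

theorem sum_prod_one_add_sum_eq_one (hsymm : ∀ i j x y, i ≠ j → A i j x y = A j i y x) :
    ∑ s : ∀ i, E i, ∏ i, (1 + ∑ j ∈ univ.erase i, A i j (s i) (s j)) = 1 := by
  have hexpand : ∀ s i, 1 + ∑ j ∈ univ.erase i, A i j (s i) (s j) = ∑ j, pairWeight A s i j := by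
    intro s i
    rw [← add_sum_erase _ _ (mem_univ i)]
    exact congr_arg₂ _ (if_pos rfl).symm
      (sum_congr rfl fun j hj => (if_neg (ne_of_mem_erase hj).symm).symm)
  simp only [hexpand, Fintype.prod_sum]
  rw [sum_comm]
  exact sum_weightSum hodd heven hsymm

end Parity

theorem odd_ncard_setOf_forall_even_ncard {ι : Type*} [Fintype ι] {E : ι → Type*}
    [∀ i, Fintype (E i)] (hodd : ∀ i, Odd (Fintype.card (E i)))
    (R : ∀ i j, E i → E j → Prop) (hsymm : ∀ i j x y, i ≠ j → (R i j x y ↔ R j i y x))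
    (heven : ∀ i j, i ≠ j → ∀ y, Even {x | R i j x y}.ncard) :
    Odd {s : ∀ i, E i | ∀ i, Even {j | j ≠ i ∧ R i j (s i) (s j)}.ncard}.ncard := by
  classical
  let A : ∀ i j, E i → E j → ZMod 2 := fun i j x y => if R i j x y then 1 else 0
  have hdeg : ∀ (s : ∀ i, E i) i, Even {j | j ≠ i ∧ R i j (s i) (s j)}.ncard ↔
      ∑ j ∈ univ.erase i, A i j (s i) (s j) = 0 := by
    intro s i
    rw [← ZMod.natCast_eq_zero_iff_even, natCast_ncard_setOf, ← filter_ne', sum_filter]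
    simp only [A, ite_and]
  have hevenA : ∀ i j, i ≠ j → ∀ y, ∑ x, A i j x y = 0 := fun i j hij y => by
    rw [← natCast_ncard_setOf, ZMod.natCast_eq_zero_iff_even]
    exact heven i j hij y
  have hsymmA : ∀ i j x y, i ≠ j → A i j x y = A j i y x :=
    fun i j x y hij => if_congr (hsymm i j x y hij) rfl rfl
  rw [← ZMod.natCast_eq_one_iff_odd, natCast_ncard_setOf]
  refine (sum_congr rfl fun s _ => ?_).trans (sum_prod_one_add_sum_eq_one hodd hevenA hsymmA)
  simp only [hdeg]
  exact ZMod.ite_forall_eq_zero _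

theorem stmt_3_general (n : ℕ) (m : Fin n → ℕ)
    (v : (i : Fin n) → Fin (2 * m i + 3) → ℝ)
    (hinj : Function.Injective (fun p : Σ i : Fin n, Fin (2 * m i + 3) => v p.1 p.2)) :
    Odd {s : ∀ i : Fin n, Fin (2 * m i + 3) |
        ∀ i, Even {j | j ≠ i ∧
          chordsCross (v i (s i)) (v i (s i + 1)) (v j (s j)) (v j (s j + 1))}.ncard}.ncard := by
  have hdisj : ∀ i j, i ≠ j → ∀ x y, v i x ≠ v j y :=
    fun i j hij x y h => hij (congrArg Sigma.fst (@hinj ⟨i, x⟩ ⟨j, y⟩ h))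
  refine odd_ncard_setOf_forall_even_ncard (fun i => ?_)
    (fun i j x y => chordsCross (v i x) (v i (x + 1)) (v j y) (v j (y + 1)))
    (fun i j x y hij => chordsCross_comm (hdisj i j hij _ _) (hdisj i j hij _ _))
    fun i j hij y => even_ncard_chordsCross_polygon (v i) (fun x => hdisj i j hij x y)
      fun x => hdisj i j hij x (y + 1)
  rw [Fintype.card_fin]
  exact ⟨m i + 1, by ring⟩

/-- for inscribed closed polygonal lines `P_1, ..., P_n`, each
with an odd number (`2 * m i + 3`) of edges and pairwise disjoint vertex sets,
the number of ways of choosing one edge from each polygon so that every chosen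
chord crosses an even number of the other chosen chords is odd. -/
theorem stmt_3 (n : ℕ) (m : Fin n → ℕ)
    (v : (i : Fin n) → Fin (2 * m i + 3) → ℝ)
    (hrange : ∀ i k, v i k ∈ Set.Ico (0 : ℝ) (2 * Real.pi))
    (hinj : Function.Injective (fun p : Σ i : Fin n, Fin (2 * m i + 3) => v p.1 p.2)) :
    Odd {s : ∀ i : Fin n, Fin (2 * m i + 3) |
        ∀ i, Even {j | j ≠ i ∧
          chordsCross (v i (s i)) (v i (s i + 1)) (v j (s j)) (v j (s j + 1))}.ncard}.ncard :=
  stmt_3_general n m v hinj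
end

section
/- Let K be a field, A_1, ..., A_m ⊆ K \ {0} sets of size 3, and φ_i: A_i → K defined by φ_i(u) = vw/((u-v)(u-w)) where A_i = {u,v,w}. Let Φ be a Laurent polynomial in x_1,...,x_m such that every monomial ∏ x_i^{d_i} of Φ has all d_i ∈ {0,1,2}, and every such monomial with (d_1,...,d_m) ≠ 0 has d_i ∈ {1,2} for some i. Then the constant term of Φ equals Σ_{x_1 ∈ A_1, ..., x_m ∈ A_m} Φ(x_1,...,x_m) ∏_{i=1}^m φ_i(x_i). -/
lemma key_lemma {K : Type*} [Field K] [DecidableEq K] (s : Finset K) (hs : s.card = 3)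
    (d : ℕ) (hd : d ≤ 2) :
    ∑ u ∈ s, u ^ d * ((∏ y ∈ s.erase u, y) / ∏ y ∈ s.erase u, (u - y)) =
      if d = 0 then 1 else 0 := by
  obtain ⟨u, v, w, huv, huw, hvw, rfl⟩ := Finset.card_eq_three.mp hs
  have huv' : u - v ≠ 0 := sub_ne_zero.mpr huv
  have huw' : u - w ≠ 0 := sub_ne_zero.mpr huw
  have hvw' : v - w ≠ 0 := sub_ne_zero.mpr hvw
  have hvu' : v - u ≠ 0 := sub_ne_zero.mpr huv.symm
  have hwu' : w - u ≠ 0 := sub_ne_zero.mpr huw.symm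
  have hwv' : w - v ≠ 0 := sub_ne_zero.mpr hvw.symm
  have h1 : ({u, v, w} : Finset K).erase u = {v, w} := by
    rw [Finset.erase_insert]; simp [huv, huw]
  have h2 : ({u, v, w} : Finset K).erase v = {u, w} := by
    ext x; simp [Finset.mem_erase]; constructor
    · rintro ⟨hx, (rfl|rfl|rfl)⟩ <;> tauto
    · rintro (rfl|rfl) <;> simp [huv, hvw.symm]
  have h3 : ({u, v, w} : Finset K).erase w = {u, v} := by
    ext x; simp [Finset.mem_erase]; constructor
    · rintro ⟨hx, (rfl|rfl|rfl)⟩ <;> tauto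
    · rintro (rfl|rfl) <;> simp [huw, hvw]
  rw [Finset.sum_insert (by simp [huv, huw]), Finset.sum_insert (by simp [hvw]),
    Finset.sum_singleton, h1, h2, h3]
  rw [Finset.prod_insert (by simp [hvw]), Finset.prod_insert (by simp [hvw]),
    Finset.prod_insert (by simp [huw]), Finset.prod_insert (by simp [huw]),
    Finset.prod_insert (by simp [huv]), Finset.prod_insert (by simp [huv])]
  simp only [Finset.prod_singleton]
  interval_cases d <;> [simp; simp only [one_ne_zero, OfNat.ofNat_ne_zero, ↓reduceIte]; simp only [one_ne_zero, OfNat.ofNat_ne_zero, ↓reduceIte]] <;> field_simp <;> ring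

/-- interpolation formula for the constant term.  If every
monomial of `Φ` has all exponents in `{0,1,2}` and every nonconstant monomial
has some exponent equal to `1` or `2`, then the constant term of `Φ` equals
the weighted sum of the values of `Φ` over the grid `A_1 × ⋯ × A_m`, the
weights being `φ_i(u) = vw/((u-v)(u-w))` for `A_i = {u,v,w}`. -/
theorem stmt_8 {K : Type*} [Field K] [DecidableEq K] (m : ℕ)
    (A : Fin m → Finset K) (hA : ∀ i, (A i).card = 3) (h0 : ∀ i, (0 : K) ∉ A i)
    (Φ : MvPolynomial (Fin m) K)
    (hdeg : ∀ d ∈ Φ.support, ∀ i, d i ≤ 2)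
    (hnc : ∀ d ∈ Φ.support, d ≠ 0 → ∃ i, d i = 1 ∨ d i = 2)
    (φ : Fin m → K → K)
    (hφ : ∀ i, ∀ u ∈ A i,
      φ i u = (∏ y ∈ (A i).erase u, y) / ∏ y ∈ (A i).erase u, (u - y)) :
    MvPolynomial.coeff 0 Φ =
      ∑ x ∈ Fintype.piFinset A,
        MvPolynomial.eval x Φ * ∏ i, φ i (x i) := by
  have step1 : ∀ x ∈ Fintype.piFinset A,
      MvPolynomial.eval x Φ * ∏ i, φ i (x i) =
        ∑ d ∈ Φ.support, MvPolynomial.coeff d Φ * ∏ i, (x i ^ d i * φ i (x i)) := by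
    intro x hx
    rw [MvPolynomial.eval_eq, Finset.sum_mul]
    refine Finset.sum_congr rfl fun d _ => ?_
    rw [Finset.prod_mul_distrib, mul_assoc]
    congr 2
    exact Finset.prod_subset (Finset.subset_univ _)
      (fun i _ hi => by simp [Finsupp.notMem_support_iff.mp hi])
  rw [Finset.sum_congr rfl step1, Finset.sum_comm]
  have step2 : ∀ d ∈ Φ.support,
      (∑ x ∈ Fintype.piFinset A, MvPolynomial.coeff d Φ * ∏ i, (x i ^ d i * φ i (x i))) =
        MvPolynomial.coeff d Φ * if d = 0 then 1 else 0 := by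
    intro d hd
    rw [← Finset.mul_sum, ← Finset.prod_univ_sum (t := A) (f := fun i u => u ^ d i * φ i u)]
    congr 1
    have : ∀ i : Fin m, (∑ u ∈ A i, u ^ d i * φ i u) = if d i = 0 then 1 else 0 := by
      intro i
      rw [Finset.sum_congr rfl fun u hu => by rw [hφ i u hu]]
      exact key_lemma (A i) (hA i) (d i) (hdeg d hd i)
    rw [Finset.prod_congr rfl fun i _ => this i]
    by_cases h : d = 0
    · simp [h]
    · have : ∃ i, d i ≠ 0 := by
        by_contra hc
        push_neg at hc
        exact h (Finsupp.ext hc)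
      obtain ⟨i, hi⟩ := this
      rw [if_neg h]
      exact Finset.prod_eq_zero (Finset.mem_univ i) (if_neg hi)
  rw [Finset.sum_congr rfl step2]
  by_cases h0' : (0 : Fin m →₀ ℕ) ∈ Φ.support
  · rw [Finset.sum_eq_single 0 (fun d _ hd => by simp [hd]) (fun h => absurd h0' h)]
    simp
  · rw [Finset.sum_eq_zero fun d hd => ?_, MvPolynomial.notMem_support_iff.mp h0']
    rcases eq_or_ne d 0 with rfl | h
    · exact absurd hd h0'
    · simp [h]
end

section
/- Let G be a cycle-plus-triangles graph on 3n vertices and fix a proper 3-coloring with colors c_1, c_2, c_3. For {i,j,k} = {1,2,3}, let N_k denote the number of edges of the Hamiltonian cycle whose endpoints are colored c_i and c_j. Then N_1 = N_2 = N_3 = n. -/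
/-!
Each triangle is rainbow, so every colour class meets each triangle exactly once and has `n`
vertices. Since consecutive cycle vertices get different colours, the cycle edges starting at
colour `k` and those ending at colour `k` are two disjoint families of `n` edges each; the
remaining `3n - 2n = n` edges avoid `k`.
-/

open Finset Function

theorem card_filter_ne_and_ne_add_two_mul_card_filter_eq {V β : Type*} [Fintype V] [DecidableEq β]
    (σ : Equiv.Perm V) (c : V → β) (hc : ∀ v, c v ≠ c (σ v)) (k : β) :
    #{v | c v ≠ k ∧ c (σ v) ≠ k} + 2 * #{v | c v = k} = Fintype.card V := by
  classical
  have hshift : #{v | c (σ v) = k} = #{v | c v = k} :=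
    card_equiv σ fun v => by simp
  have hdisj : Disjoint ({v | c v = k} : Finset V) ({v | c (σ v) = k} : Finset V) :=
    disjoint_filter.mpr fun v _ h h' => hc v (h.trans h'.symm)
  rw [← card_univ, ← card_filter_add_card_filter_not (s := univ) (fun v => c v = k ∨ c (σ v) = k),
    filter_or, card_union_of_disjoint hdisj, hshift]
  simp only [not_or]
  ring

theorem card_filter_eq_of_injective_row {α β : Type*} [Fintype α] [Fintype β] [DecidableEq β]
    (f : α × β → β) (hf : ∀ a, Injective fun b => f (a, b)) (k : β) :
    #{p | f p = k} = Fintype.card α := by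
  have hrow (a : α) : #{b | f (a, b) = k} = 1 := by
    obtain ⟨b, hb⟩ := (Finite.injective_iff_surjective.mp (hf a)) k
    refine card_eq_one.mpr ⟨b, ?_⟩
    ext b'
    simpa using ⟨fun h => hf a (h.trans hb.symm), fun h => h ▸ hb⟩
  rw [card_filter, Fintype.sum_prod_type]
  simp [hrow]

/-- in any proper 3-coloring of a cycle-plus-triangles graph on
`3n` vertices, for each color `k` the number of Hamiltonian-cycle edges whose
endpoints avoid color `k` (i.e. are colored with the other two colors) is `n`. -/
theorem stmt_11 (n : ℕ) (hn : 1 ≤ n) (t : Fin n × Fin 3 ≃ Fin (3 * n)) :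
    haveI : NeZero (3 * n) := ⟨by omega⟩
    let G : SimpleGraph (Fin (3 * n)) :=
      SimpleGraph.fromRel (fun u v => v = u + 1 ∨ (t.symm u).1 = (t.symm v).1)
    (∀ u : Fin (3 * n), (t.symm u).1 ≠ (t.symm (u + 1)).1) →
    ∀ c : Fin (3 * n) → Fin 3, (∀ u v, G.Adj u v → c u ≠ c v) →
      ∀ k : Fin 3, {i : Fin (3 * n) | c i ≠ k ∧ c (i + 1) ≠ k}.ncard = n := by
  have : NeZero (3 * n) := ⟨by omega⟩
  intro G _ c hc k
  have hcycle (i : Fin (3 * n)) : c i ≠ c (Equiv.addRight 1 i) := by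
    have hsucc : i ≠ i + 1 := by
      simpa [eq_comm] using Fin.one_eq_zero_iff.not.mpr (show 3 * n ≠ 1 by omega)
    exact hc _ _ ⟨hsucc, .inl (.inl rfl)⟩
  have htriangle (j : Fin n) : Injective fun a => c (t (j, a)) := fun a b hab => by
    by_contra hab'
    exact hc _ _ ⟨by simpa using hab', .inl (.inr (by simp))⟩ hab
  have hclass : #{i | c i = k} = n := by
    rw [card_equiv (t := {p | c (t p) = k}) t.symm fun i => by simp,
      card_filter_eq_of_injective_row (fun p => c (t p)) htriangle, Fintype.card_fin]
  have hcount : #{i | c i ≠ k ∧ c (i + 1) ≠ k} + 2 * n = 3 * n := by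
    have := card_filter_ne_and_ne_add_two_mul_card_filter_eq (.addRight 1) c hcycle k
    rwa [hclass, Fintype.card_fin] at this
  rw [← coe_filter_univ, Set.ncard_coe_finset]
  omega
end

section
/- Consider a proper 2-coloring (black/white) of 2n points on a circle that are the endpoint sets of n pairwise non-adjacent chords, one black and one white endpoint per chord. The black and white points alternate around the circle if and only if each chord crosses an even number of the other chords. -/
open Finset Function

section LinearOrder

variable {α β : Type*} [LinearOrder α] [LinearOrder β]

-- `circBtw` is definitionally this relation on `ℝ`.
def cyclicBtw (a b c : α) : Prop :=
  if a < c then a < b ∧ b < c else a < b ∨ b < c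

instance (a b c : α) : Decidable (cyclicBtw a b c) := by
  unfold cyclicBtw; infer_instance

theorem not_cyclicBtw_self_left (a b : α) : ¬ cyclicBtw a a b := by
  unfold cyclicBtw; split_ifs <;> simp_all

theorem not_cyclicBtw_self_right (a b : α) : ¬ cyclicBtw a b b := by
  unfold cyclicBtw; split_ifs <;> simp_all

theorem cyclicBtw_congr {P : Type*} {f : P → α} {g : P → β}
    (h : ∀ p q, f p < f q ↔ g p < g q) (p q r : P) :
    cyclicBtw (f p) (f q) (f r) ↔ cyclicBtw (g p) (g q) (g r) := by
  simp only [cyclicBtw, h]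

theorem exists_equiv_fin_lt_iff {P : Type*} [Fintype P] (x : P → α) (hx : Injective x) :
    ∃ ρ : P ≃ Fin (Fintype.card P), ∀ p q, x p < x q ↔ ρ p < ρ q := by
  let _ := LinearOrder.lift' x hx
  let ρ := (Fintype.orderIsoFinOfCardEq P rfl).symm
  exact ⟨ρ.toEquiv, fun p q => ρ.lt_iff_lt.symm⟩

end LinearOrder

namespace Fin

variable {m : ℕ}

theorem even_add_one_mod_iff (hm : Even m) (a : Fin m) :
    Even (((a : ℕ) + 1) % m) ↔ ¬ Even (a : ℕ) := by
  rcases Nat.lt_or_ge ((a : ℕ) + 1) m with h | h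
  · rw [Nat.mod_eq_of_lt h, Nat.even_add_one]
  · have ha : (a : ℕ) + 1 = m := by omega
    rw [ha, Nat.mod_self, ← Nat.even_add_one, ha]
    simpa using hm

theorem forall_not_cyclicBtw_iff {a b : Fin m} :
    (∀ x, x ≠ a → x ≠ b → ¬ cyclicBtw a x b) ↔ (b : ℕ) = (a + 1) % m := by
  have := a.isLt
  have := b.isLt
  rcases Nat.lt_or_ge ((a : ℕ) + 1) m with h | h
  · rw [Nat.mod_eq_of_lt h]
    constructor
    · intro H
      by_contra hb
      refine H ⟨a + 1, h⟩ (by simp [Fin.ext_iff]) (by simp [Fin.ext_iff]; omega) ?_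
      simp only [cyclicBtw, Fin.lt_def]
      split_ifs <;> omega
    · intro hb x hxa hxb
      have := Fin.val_ne_of_ne hxa
      have := Fin.val_ne_of_ne hxb
      simp only [cyclicBtw, Fin.lt_def]
      split_ifs <;> omega
  · rw [show (a : ℕ) + 1 = m by omega, Nat.mod_self]
    constructor
    · intro H
      by_contra hb
      refine H ⟨0, by omega⟩ (by simp [Fin.ext_iff]; omega) (by simp [Fin.ext_iff]; omega) ?_
      simp only [cyclicBtw, Fin.lt_def]
      split_ifs <;> omega
    · intro hb x hxa hxb
      have := Fin.val_ne_of_ne hxa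
      have := Fin.val_ne_of_ne hxb
      have := x.isLt
      simp only [cyclicBtw, Fin.lt_def]
      split_ifs <;> omega

theorem alternating_iff (hm : Even m) (col : Fin m → Prop) :
    (∀ a b : Fin m, (b : ℕ) = (a + 1) % m → (col a ↔ ¬ col b)) ↔
      (∀ a, col a ↔ Even (a : ℕ)) ∨ (∀ a, col a ↔ ¬ Even (a : ℕ)) := by
  constructor
  · intro h
    rcases Nat.eq_zero_or_pos m with rfl | hm0
    · exact Or.inl fun a => a.elim0
    have key : ∀ v (hv : v < m), col ⟨v, hv⟩ ↔ (Even v ↔ col ⟨0, hm0⟩) := by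
      intro v
      induction v with
      | zero => simp
      | succ v ih =>
        intro hv
        have hstep := h ⟨v, by omega⟩ ⟨v + 1, hv⟩ (Nat.mod_eq_of_lt hv).symm
        rw [ih (by omega)] at hstep
        rw [Nat.even_add_one]
        tauto
    by_cases h0 : col ⟨0, hm0⟩
    · exact Or.inl fun a => by simpa [h0] using key a a.isLt
    · exact Or.inr fun a => by simpa [h0] using key a a.isLt
  · rintro (h | h) a b hb <;> rw [h, h, hb, even_add_one_mod_iff hm] <;> tauto

theorem even_card_cyclicBtw_iff (hm : Even m) {a b : Fin m} (hab : a ≠ b) :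
    Even #{x | cyclicBtw a x b} ↔ (Even (a : ℕ) ↔ ¬ Even (b : ℕ)) := by
  obtain ⟨t, rfl⟩ := hm
  rcases lt_or_gt_of_ne hab with h | h
  · have hset : ({x | cyclicBtw a x b} : Finset (Fin (t + t))) = Ioo a b := by
      ext x; simp [cyclicBtw, h]
    rw [hset, Fin.card_Ioo]
    rw [Fin.lt_def] at h
    simp only [Nat.even_iff]
    omega
  · have hset : ({x | cyclicBtw a x b} : Finset (Fin (t + t))) = Ioi a ∪ Iio b := by
      ext x; simp [cyclicBtw, not_lt_of_gt h]
    have hdisj : Disjoint (Ioi a) (Iio b) :=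
      disjoint_left.2 fun x hxa hxb => lt_asymm ((mem_Iio.1 hxb).trans h) (mem_Ioi.1 hxa)
    rw [hset, card_union_of_disjoint hdisj, Fin.card_Ioi, Fin.card_Iio]
    rw [Fin.lt_def] at h
    have := a.isLt
    simp only [Nat.even_iff]
    omega

theorem odd_card_filter_two_iff (p : Fin 2 → Prop) [DecidablePred p] :
    Odd #{j | p j} ↔ Xor (p 0) (p 1) := by
  rw [card_filter, Fin.sum_univ_two]
  by_cases h0 : p 0 <;> by_cases h1 : p 1 <;> simp [h0, h1, Xor]

end Fin

theorem even_ncard_crossing_iff {ι : Type*} [Fintype ι] {m : ℕ} (ρ : ι × Fin 2 ≃ Fin m)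
    (i : ι) :
    Even {k | k ≠ i ∧ Xor (cyclicBtw (ρ (i, 0)) (ρ (k, 0)) (ρ (i, 1)))
        (cyclicBtw (ρ (i, 0)) (ρ (k, 1)) (ρ (i, 1)))}.ncard ↔
      (Even (ρ (i, 0) : ℕ) ↔ ¬ Even (ρ (i, 1) : ℕ)) := by
  classical
  set A := ρ (i, 0)
  set B := ρ (i, 1)
  have hm : Even m := ⟨Fintype.card ι, by simpa [mul_two] using (Fintype.card_congr ρ).symm⟩
  have hAB : A ≠ B := ρ.injective.ne (by simp)
  have hsum : #{x | cyclicBtw A x B} = ∑ k, #{j | cyclicBtw A (ρ (k, j)) B} := by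
    simp only [card_filter]
    rw [← Equiv.sum_comp ρ, Fintype.sum_prod_type]
  have hodd : {k | k ≠ i ∧ Xor (cyclicBtw A (ρ (k, 0)) B) (cyclicBtw A (ρ (k, 1)) B)} =
      ↑({k | Odd #{j | cyclicBtw A (ρ (k, j)) B}} : Finset ι) := by
    ext k
    rw [coe_filter, Set.mem_ofPred_eq, Set.mem_ofPred_eq, Fin.odd_card_filter_two_iff]
    by_cases hk : k = i
    · subst hk; simp [Xor, A, B, not_cyclicBtw_self_left, not_cyclicBtw_self_right]
    · simp [hk]
  rw [hodd, Set.ncard_coe_finset, ← even_sum_iff_even_card_odd, ← hsum,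
    Fin.even_card_cyclicBtw_iff hm hAB]

theorem alternating_iff_of_equiv {P : Type*} {m : ℕ} (hm : Even m) (ρ : P ≃ Fin m)
    (col : P → Prop) :
    (∀ p q, p ≠ q → (∀ r, r ≠ p → r ≠ q → ¬ cyclicBtw (ρ p) (ρ r) (ρ q)) →
        (col p ↔ ¬ col q)) ↔
      (∀ p, col p ↔ Even (ρ p : ℕ)) ∨ (∀ p, col p ↔ ¬ Even (ρ p : ℕ)) := by
  have hsucc (p q : P) : (∀ r, r ≠ p → r ≠ q → ¬ cyclicBtw (ρ p) (ρ r) (ρ q)) ↔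
      (ρ q : ℕ) = (ρ p + 1) % m := by
    rw [← Fin.forall_not_cyclicBtw_iff, ← ρ.forall_congr_right]
    simp only [ρ.injective.ne_iff]
  have hcol (φ : Fin m → Prop) : (∀ p, col p ↔ φ (ρ p)) ↔ ∀ a, col (ρ.symm a) ↔ φ a :=
    ρ.forall_congr_left.trans (by simp only [Equiv.apply_symm_apply])
  simp only [hsucc, hcol (fun a => Even (a : ℕ)), hcol (fun a => ¬ Even (a : ℕ))]
  rw [← Fin.alternating_iff hm (fun a => col (ρ.symm a))]
  constructor
  · intro h a b hb
    -- the successor of `a` has the other parity, so it is a different point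
    have hab : a ≠ b := fun hab => by
      have := Fin.even_add_one_mod_iff hm a
      rw [← hb, hab] at this
      exact iff_not_self this
    simpa using h (ρ.symm a) (ρ.symm b) (ρ.symm.injective.ne hab) (by simpa using hb)
  · intro h p q _ hq
    simpa using h (ρ p) (ρ q) hq

section Orientation

variable {ι : Type*} (κ : ι × Fin 2 → Prop)

theorem exists_forall_eq_iff :
    (∃ ε : ι → Fin 2, ∀ p, p.2 = ε p.1 ↔ κ p) ↔ ∀ i, (κ (i, 0) ↔ ¬ κ (i, 1)) := by
  classical
  constructor
  · rintro ⟨ε, h⟩ i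
    rw [← h, ← h]
    show (0 : Fin 2) = ε i ↔ ¬ (1 : Fin 2) = ε i
    omega
  · intro h
    refine ⟨fun i => if κ (i, 0) then 0 else 1, ?_⟩
    rintro ⟨i, j⟩
    fin_cases j <;> by_cases h0 : κ (i, 0) <;> simp_all

variable {κ} in
theorem eq_of_forall_eq_iff {ε ε' : ι → Fin 2} (h : ∀ p, p.2 = ε p.1 ↔ κ p)
    (h' : ∀ p, p.2 = ε' p.1 ↔ κ p) : ε = ε' :=
  funext fun i => (h' (i, ε i)).2 ((h (i, ε i)).1 rfl)

theorem exists_forall_eq_iff_or_not :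
    (∃ ε : ι → Fin 2, (∀ p, p.2 = ε p.1 ↔ κ p) ∨ ∀ p, p.2 = ε p.1 ↔ ¬ κ p) ↔
      ∀ i, (κ (i, 0) ↔ ¬ κ (i, 1)) := by
  rw [exists_or, exists_forall_eq_iff, exists_forall_eq_iff]
  exact ⟨fun h => h.elim id fun h i => by have := h i; tauto, Or.inl⟩

theorem ncard_setOf_forall_eq_iff_or_not [Nonempty ι] (hκ : ∀ i, (κ (i, 0) ↔ ¬ κ (i, 1))) :
    {ε : ι → Fin 2 | (∀ p, p.2 = ε p.1 ↔ κ p) ∨ ∀ p, p.2 = ε p.1 ↔ ¬ κ p}.ncard = 2 := by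
  obtain ⟨ε₀, h₀⟩ := (exists_forall_eq_iff κ).2 hκ
  obtain ⟨ε₁, h₁⟩ := (exists_forall_eq_iff (¬ κ ·)).2 fun i => by rw [hκ i]
  have hset : {ε : ι → Fin 2 | (∀ p, p.2 = ε p.1 ↔ κ p) ∨ ∀ p, p.2 = ε p.1 ↔ ¬ κ p} =
      {ε₀, ε₁} := by
    ext ε
    simp only [Set.mem_ofPred_eq, Set.mem_insert_iff, Set.mem_singleton_iff]
    constructor
    · rintro (h | h)
      exacts [Or.inl (eq_of_forall_eq_iff h h₀), Or.inr (eq_of_forall_eq_iff h h₁)]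
    · rintro (rfl | rfl)
      exacts [Or.inl h₀, Or.inr h₁]
  rw [hset, Set.ncard_pair]
  obtain ⟨i⟩ := ‹Nonempty ι›
  intro h
  exact (h₁ (i, ε₀ i)).1 (by rw [h]) ((h₀ (i, ε₀ i)).1 rfl)

end Orientation

theorem stmt_19_general (n : ℕ) (hn : 1 ≤ n) (e : Fin n → Fin 2 → ℝ)
    (hinj : Function.Injective (fun p : Fin n × Fin 2 => e p.1 p.2)) :
    let alt : (Fin n → Fin 2) → Prop := fun ε =>
      ∀ (i k : Fin n) (j l : Fin 2), (i, j) ≠ (k, l) →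
        (∀ (a : Fin n) (b : Fin 2), (a, b) ≠ (i, j) → (a, b) ≠ (k, l) →
          ¬ circBtw (e i j) (e a b) (e k l)) →
        ((j = ε i) ↔ ¬ (l = ε k))
    let evenCross : Prop :=
      ∀ i, Even {k | k ≠ i ∧ chordsCross (e i 0) (e i 1) (e k 0) (e k 1)}.ncard
    ((∃ ε, alt ε) ↔ evenCross) ∧ (evenCross → {ε | alt ε}.ncard = 2) := by
  intro alt evenCross
  obtain ⟨ρ, hρ⟩ := exists_equiv_fin_lt_iff _ hinj
  have hm : Even (Fintype.card (Fin n × Fin 2)) := by simp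
  have hbtw (i k a : Fin n) (j l b : Fin 2) :
      circBtw (e i j) (e k l) (e a b) ↔ cyclicBtw (ρ (i, j)) (ρ (k, l)) (ρ (a, b)) :=
    cyclicBtw_congr hρ (i, j) (k, l) (a, b)
  have hAlt (ε : Fin n → Fin 2) : alt ε ↔
      (∀ p, p.2 = ε p.1 ↔ Even (ρ p : ℕ)) ∨ ∀ p, p.2 = ε p.1 ↔ ¬ Even (ρ p : ℕ) := by
    rw [← alternating_iff_of_equiv hm ρ]
    simp only [alt, hbtw]
    exact ⟨fun h p q hpq hr => h p.1 q.1 p.2 q.2 hpq fun a b => hr (a, b),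
      fun h i k j l hne hr => h (i, j) (k, l) hne fun r => hr r.1 r.2⟩
  have hEven : evenCross ↔ ∀ i, (Even (ρ (i, 0) : ℕ) ↔ ¬ Even (ρ (i, 1) : ℕ)) := by
    simp only [evenCross, chordsCross, hbtw]
    exact forall_congr' (even_ncard_crossing_iff ρ)
  have : Nonempty (Fin n) := ⟨⟨0, hn⟩⟩
  simp only [hAlt, hEven]
  exact ⟨exists_forall_eq_iff_or_not _,
    ncard_setOf_forall_eq_iff_or_not (fun p => Even (ρ p : ℕ))⟩

/-- given `n` pairwise non-adjacent chords of a circle (chord `i`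
has endpoint angles `e i 0`, `e i 1`, all `2n` endpoints distinct), a choice
`ε` of one black endpoint per chord (the other being white) is *alternating*
if any two cyclically consecutive endpoints get different colors.  Then an
alternating choice exists iff every chord crosses an even number of the other
chords, and in that case there are exactly two alternating choices. -/
theorem stmt_19 (n : ℕ) (hn : 1 ≤ n) (e : Fin n → Fin 2 → ℝ)
    (hrange : ∀ i j, e i j ∈ Set.Ico (0 : ℝ) (2 * Real.pi))
    (hinj : Function.Injective (fun p : Fin n × Fin 2 => e p.1 p.2)) :
    let alt : (Fin n → Fin 2) → Prop := fun ε =>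
      ∀ (i k : Fin n) (j l : Fin 2), (i, j) ≠ (k, l) →
        (∀ (a : Fin n) (b : Fin 2), (a, b) ≠ (i, j) → (a, b) ≠ (k, l) →
          ¬ circBtw (e i j) (e a b) (e k l)) →
        ((j = ε i) ↔ ¬ (l = ε k))
    let evenCross : Prop :=
      ∀ i, Even {k | k ≠ i ∧ chordsCross (e i 0) (e i 1) (e k 0) (e k 1)}.ncard
    ((∃ ε, alt ε) ↔ evenCross) ∧ (evenCross → {ε | alt ε}.ncard = 2) :=
  stmt_19_general n hn e hinj
end
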